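/- Let D be a derivation of g(γ,Q) of degree zero, i.e., there is a function φ:ℤ^d→ℂ with D(L_m)=φ(m)L_m for all m∈ℤ^d. Then φ is additive (φ(m+n)=φ(m)+φ(n) for all m,n∈ℤ^d), and consequently D=Σ_{i=1}^d φ(e_i)∂_i, where ∂_i is the derivation defined by ∂_i(L_m)=m_i L_m. In particular the space of degree-zero derivations of g is exactly the span of ∂_1,…,∂_d. -/

import Mathlib

open scoped BigOperators

namespace QTorus

/-- σ(m,n) = ∏_{i<j} q_{ji}^{m_j n_i}. -/
noncomputable def qsigma (d : ℕ) (Q : Matrix (Fin d) (Fin d) ℂ) (m n : Fin d → ℤ) : ℂ :=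
  ∏ i : Fin d, ∏ j : Fin d, if i < j then Q j i ^ (m j * n i) else 1

/-- The radical subgroup R = {m | σ(m,n)=σ(n,m) for all n}. -/
def Rset (d : ℕ) (Q : Matrix (Fin d) (Fin d) ℂ) : Set (Fin d → ℤ) :=
  {m | ∀ n : Fin d → ℤ, qsigma d Q m n = qsigma d Q n m}

/-- (γ|m) = ∑ γ_i m_i. -/
noncomputable def ip (d : ℕ) (γ : Fin d → ℂ) (m : Fin d → ℤ) : ℂ :=
  ∑ i : Fin d, γ i * (m i : ℂ)

/-- The underlying vector space of g(γ,Q): formal ℂ-linear combinations of basis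
vectors indexed by ℤ^d. -/
abbrev g (d : ℕ) := (Fin d → ℤ) →₀ ℂ

/-- The basis vector L_m. -/
noncomputable def L (d : ℕ) (m : Fin d → ℤ) : g d := Finsupp.single m 1

/-- Hypotheses on the matrix Q: nonzero entries, q_{ii}=1, q_{ij}q_{ji}=1. -/
def QOk (d : ℕ) (Q : Matrix (Fin d) (Fin d) ℂ) : Prop :=
  (∀ i, Q i i = 1) ∧ (∀ i j, Q i j * Q j i = 1) ∧ (∀ i j, Q i j ≠ 0)

/-- γ is generic: γ_1,…,γ_d are linearly independent over ℚ. -/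
def Generic (d : ℕ) (γ : Fin d → ℂ) : Prop := LinearIndependent ℚ γ

open Classical in
/-- Structure constants of g(γ,Q): [L_m, L_n] = sc(m,n) • L_{m+n}. -/
noncomputable def sc (d : ℕ) (Q : Matrix (Fin d) (Fin d) ℂ) (γ : Fin d → ℂ)
    (m n : Fin d → ℤ) : ℂ :=
  if m ∈ Rset d Q then
    (if n ∈ Rset d Q then qsigma d Q m n * ip d γ (n - m)
     else qsigma d Q m n * ip d γ n)
  else
    (if n ∈ Rset d Q then -(qsigma d Q n m * ip d γ m)
     else qsigma d Q m n - qsigma d Q n m)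

/-- The bracket of g(γ,Q), as the bilinear extension of
[L_m, L_n] = sc(m,n) • L_{m+n}. -/
noncomputable def br (d : ℕ) (Q : Matrix (Fin d) (Fin d) ℂ) (γ : Fin d → ℂ)
    (x y : g d) : g d :=
  x.sum fun m a => y.sum fun n b => Finsupp.single (m + n) (a * b * sc d Q γ m n)

/-- A Lie algebra automorphism of g(γ,Q): a linear equivalence preserving the bracket. -/
def IsAut (d : ℕ) (Q : Matrix (Fin d) (Fin d) ℂ) (γ : Fin d → ℂ)
    (θ : g d ≃ₗ[ℂ] g d) : Prop :=
  ∀ x y : g d, θ (br d Q γ x y) = br d Q γ (θ x) (θ y)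

/-- A derivation of g(γ,Q). -/
def IsDer (d : ℕ) (Q : Matrix (Fin d) (Fin d) ℂ) (γ : Fin d → ℂ)
    (D : g d →ₗ[ℂ] g d) : Prop :=
  ∀ x y : g d, D (br d Q γ x y) = br d Q γ (D x) y + br d Q γ x (D y)

open Classical in
/-- δ(n,R) = 1 if n ∈ R, 0 otherwise. -/
noncomputable def deltaR (d : ℕ) (Q : Matrix (Fin d) (Fin d) ℂ) (n : Fin d → ℤ) : ℕ :=
  if n ∈ Rset d Q then 1 else 0

/-- A 2-cocycle on g(γ,Q). -/
def IsCocycle (d : ℕ) (Q : Matrix (Fin d) (Fin d) ℂ) (γ : Fin d → ℂ)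
    (α : g d →ₗ[ℂ] g d →ₗ[ℂ] ℂ) : Prop :=
  (∀ x y : g d, α x y = - α y x) ∧
  (∀ x y z : g d,
    α (br d Q γ x y) z + α (br d Q γ z x) y + α (br d Q γ y z) x = 0)

/-- i ↔ j is one of the exceptional index pairs (2l-1,2l) (1-based) of the rational
normal form. Here indices are 0-based. -/
def OffDiagPair (z : ℕ) (i j : ℕ) : Prop :=
  ∃ l : ℕ, l < z ∧ ((i = 2 * l ∧ j = 2 * l + 1) ∨ (i = 2 * l + 1 ∧ j = 2 * l))

/-- Q is in rational normal form with parameters z and k_1,…,k_d (0-based indexing: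
the paper's pair (2i-1,2i) is the Lean pair (2l, 2l+1) with l = i-1). -/
def IsRNF (d : ℕ) (Q : Matrix (Fin d) (Fin d) ℂ) (z : ℕ) (k : Fin d → ℕ) : Prop :=
  0 < z ∧ 2 * z ≤ d ∧
  (∀ i j : Fin d, ¬ OffDiagPair z i.val j.val → Q i j = 1) ∧
  (∀ (l : ℕ) (_ : l < z) (hi : 2 * l < d) (hj : 2 * l + 1 < d),
      IsPrimitiveRoot (Q ⟨2 * l, hi⟩ ⟨2 * l + 1, hj⟩) (k ⟨2 * l, hi⟩) ∧
      Q ⟨2 * l + 1, hj⟩ ⟨2 * l, hi⟩ = (Q ⟨2 * l, hi⟩ ⟨2 * l + 1, hj⟩)⁻¹ ∧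
      k ⟨2 * l + 1, hj⟩ = k ⟨2 * l, hi⟩ ∧
      1 < k ⟨2 * l, hi⟩) ∧
  (∀ (i : ℕ) (_ : i + 1 < 2 * z) (h1 : i < d) (h2 : i + 1 < d),
      k ⟨i + 1, h2⟩ ∣ k ⟨i, h1⟩) ∧
  (∀ i : Fin d, 2 * z ≤ i.val → k i = 1)

/-- The vector k_1 e_1 ∈ ℤ^d. -/
noncomputable def k1e1 (d : ℕ) (k : Fin d → ℕ) (hd : 0 < d) : Fin d → ℤ :=
  Pi.single ⟨0, hd⟩ (k ⟨0, hd⟩ : ℤ)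

/-- A 2-cocycle is normalized if α(L_{m-k₁e₁}, L_{k₁e₁})=0 for m ∈ R, m ≠ 2k₁e₁,
α(L_0, L_{2k₁e₁})=0, α(L_0, L_s)=0 for s ∉ R, and α(L_m,L_n)=0 whenever m+n ≠ 0. -/
def IsNormalized (d : ℕ) (Q : Matrix (Fin d) (Fin d) ℂ) (k : Fin d → ℕ) (hd : 0 < d)
    (α : g d →ₗ[ℂ] g d →ₗ[ℂ] ℂ) : Prop :=
  (∀ m ∈ Rset d Q, m ≠ 2 • k1e1 d k hd →
      α (L d (m - k1e1 d k hd)) (L d (k1e1 d k hd)) = 0) ∧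
  α (L d 0) (L d (2 • k1e1 d k hd)) = 0 ∧
  (∀ s, s ∉ Rset d Q → α (L d 0) (L d s) = 0) ∧
  (∀ m n : Fin d → ℤ, m + n ≠ 0 → α (L d m) (L d n) = 0)

/-- The degree derivation ∂_i, acting by ∂_i(L_m) = m_i L_m. -/
noncomputable def deg (d : ℕ) (i : Fin d) (y : g d) : g d :=
  y.sum fun m a => Finsupp.single m ((m i : ℂ) * a)

open Classical in
/-- The 2-cocycle α₁: α₁(L_m,L_n) = δ_{m+n,0}((m_γ)³-m_γ)/12 for m ∈ R, 0 otherwise,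
where m_γ = (γ|m)/(γ|k₁e₁). -/
noncomputable def alpha1 (d : ℕ) (Q : Matrix (Fin d) (Fin d) ℂ) (γ : Fin d → ℂ)
    (k : Fin d → ℕ) (hd : 0 < d) (x y : g d) : ℂ :=
  x.sum fun m a => y.sum fun n b => a * b *
    (if m ∈ Rset d Q ∧ m + n = 0 then
       ((ip d γ m / ip d γ (k1e1 d k hd)) ^ 3 - ip d γ m / ip d γ (k1e1 d k hd)) / 12
     else 0)

open Classical in
/-- The 2-cocycle α₂: α₂(L_r,L_s) = δ_{r+s,0} σ(r,-r)(γ|r)/(γ|k₁e₁) for r ∉ R,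
0 otherwise. -/
noncomputable def alpha2 (d : ℕ) (Q : Matrix (Fin d) (Fin d) ℂ) (γ : Fin d → ℂ)
    (k : Fin d → ℕ) (hd : 0 < d) (x y : g d) : ℂ :=
  x.sum fun m a => y.sum fun n b => a * b *
    (if m ∉ Rset d Q ∧ m + n = 0 then
       qsigma d Q m (-m) * (ip d γ m / ip d γ (k1e1 d k hd))
     else 0)

end QTorus

open QTorus

/-!
Comparing coefficients of `L_{m+n}` in `D[L_m, L_n] = [D L_m, L_n] + [L_m, D L_n]` gives
`φ(m+n) = φ(m) + φ(n)` whenever `[L_m, L_n] ≠ 0`; for generic `γ` this covers all pairs except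
`m = n ∈ R` and `m, n ∉ R` with `σ(m,n) = σ(n,m)`. Such a pair is reached through an auxiliary `t`
for which `(n,t)`, `(m,n+t)` and `(m+n,t)` have nonzero brackets, since then
`(m+n)+t = m+(n+t)` forces additivity at `(m,n)`. For `m = n ∈ R` any `t ∉ {0, m, 2m}` works.
For `m, n ∉ R`, `t` must avoid the kernels of the commutator characters `σ(u,·)/σ(·,u)` of
`u = m, n, m+n`; if `2m ∉ R`, one of `b, b+a, b+2a` does for suitable `a, b`. If `2m, 2n ∈ R`,
additivity follows by halving `φ(2m + 2n) = φ(2m) + φ(2n)`.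
-/

theorem map_add_of_map_add_assoc {A M : Type*} [AddSemigroup A] [AddRightCancelSemigroup M]
    {φ : A → M} {m n t : A} (hnt : φ (n + t) = φ n + φ t)
    (hm_nt : φ (m + (n + t)) = φ m + φ (n + t)) (hmn_t : φ (m + n + t) = φ (m + n) + φ t) :
    φ (m + n) = φ m + φ n :=
  add_right_cancel (b := φ t) (by rw [← hmn_t, add_assoc, hm_nt, hnt, add_assoc])

theorem apply_eq_sum_mul_single {ι R : Type*} [Fintype ι] [DecidableEq ι] [Ring R]
    {φ : (ι → ℤ) → R} (hφ : ∀ m n, φ (m + n) = φ m + φ n) (m : ι → ℤ) :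
    φ m = ∑ i, φ (Pi.single i 1) * (m i : R) := by
  conv_lhs => rw [pi_eq_sum_univ' m]
  change AddMonoidHom.mk' φ hφ _ = _
  rw [map_sum]
  refine Finset.sum_congr rfl fun i _ => ?_
  rw [map_zsmul, zsmul_eq_mul']
  rfl

namespace AddChar

variable {A M : Type*} [AddCommGroup A] [DivisionCommMonoid M]

theorem exists_apply_add_nsmul_ne (ψ : AddChar A M) {a : A} (ha : ψ a ^ 2 ≠ 1) (b : A)
    (p q : M) : ∃ k : ℕ, ψ (b + k • a) ≠ p ∧ ψ (b + k • a) ≠ q := by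
  have hv := ψ.val_isUnit b
  have hψ : ∀ k : ℕ, ψ (b + k • a) = ψ b * ψ a ^ k := fun k => by
    rw [map_add_eq_mul, map_nsmul_eq_pow]
  have ha1 : ψ a ≠ 1 := fun h => ha (by rw [h, one_pow])
  have h01 : ψ (b + 0 • a) ≠ ψ (b + 1 • a) := by
    rw [hψ, hψ, Ne, hv.mul_right_inj, pow_zero, pow_one]; exact fun h => ha1 h.symm
  have h12 : ψ (b + 1 • a) ≠ ψ (b + 2 • a) := by
    rw [hψ, hψ, Ne, hv.mul_right_inj, pow_two, pow_one, eq_comm, (ψ.val_isUnit a).mul_eq_left]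
    exact ha1
  have h02 : ψ (b + 0 • a) ≠ ψ (b + 2 • a) := by
    rw [hψ, hψ, Ne, hv.mul_right_inj, pow_zero]; exact fun h => ha h.symm
  by_contra! h
  rcases or_iff_not_imp_left.2 (h 0) with h0 | h0 <;>
    rcases or_iff_not_imp_left.2 (h 1) with h1 | h1 <;>
    rcases or_iff_not_imp_left.2 (h 2) with h2 | h2 <;>
    simp_all only [ne_eq, not_true_eq_false]

theorem exists_apply_ne_one_of_apply_eq_one {x y : AddChar A M} {a : A} (ha : x a ^ 2 ≠ 1)
    (hya : y a = 1) (hy : y ≠ 1) : ∃ t, x t ≠ 1 ∧ y t ≠ 1 ∧ (x * y) t ≠ 1 := by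
  obtain ⟨b, hb⟩ := ne_one_iff.1 hy
  obtain ⟨k, hk1, hk2⟩ := x.exists_apply_add_nsmul_ne ha b 1 (y b)⁻¹
  have hyt : y (b + k • a) = y b := by
    rw [map_add_eq_mul, map_nsmul_eq_pow, hya, one_pow, mul_one]
  refine ⟨b + k • a, hk1, hyt ▸ hb, ?_⟩
  rw [mul_apply, hyt]
  exact fun h => hk2 (eq_inv_of_mul_eq_one_left h)

theorem exists_apply_ne_one {x y : AddChar A M} (hx : x ^ 2 ≠ 1) (hy : y ≠ 1)
    (hxy : x * y ≠ 1) : ∃ t, x t ≠ 1 ∧ y t ≠ 1 ∧ (x * y) t ≠ 1 := by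
  obtain ⟨a, ha⟩ := ne_one_iff.1 hx
  rw [pow_apply] at ha
  by_cases hya : y a = 1
  · exact exists_apply_ne_one_of_apply_eq_one ha hya hy
  by_cases hxya : (x * y) a = 1
  · -- replacing `y` by `(x * y)⁻¹` swaps the roles of `y` and `x * y`
    obtain ⟨t, hxt, hyt, hxyt⟩ := exists_apply_ne_one_of_apply_eq_one (y := (x * y)⁻¹) ha
      (by rw [inv_apply', hxya, inv_one]) (inv_ne_one.2 hxy)
    rw [inv_apply', Ne, inv_eq_one] at hyt
    rw [mul_inv, mul_inv_cancel_left, inv_apply', Ne, inv_eq_one] at hxyt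
    exact ⟨t, hxt, hxyt, hyt⟩
  · exact ⟨a, fun h => ha (by rw [h, one_pow]), hya, hxya⟩

end AddChar

namespace QTorus

variable {d : ℕ} {Q : Matrix (Fin d) (Fin d) ℂ}

theorem qsigma_ne_zero (hQ : ∀ i j, Q i j ≠ 0) (m n : Fin d → ℤ) : qsigma d Q m n ≠ 0 :=
  Finset.prod_ne_zero_iff.2 fun i _ => Finset.prod_ne_zero_iff.2 fun j _ => by
    split_ifs
    exacts [zpow_ne_zero _ (hQ j i), one_ne_zero]

@[simp]
theorem qsigma_zero_left (n : Fin d → ℤ) : qsigma d Q 0 n = 1 := by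
  simp [qsigma]

@[simp]
theorem qsigma_zero_right (m : Fin d → ℤ) : qsigma d Q m 0 = 1 := by
  simp [qsigma]

theorem qsigma_add_left (hQ : ∀ i j, Q i j ≠ 0) (m m' n : Fin d → ℤ) :
    qsigma d Q (m + m') n = qsigma d Q m n * qsigma d Q m' n := by
  simp only [qsigma, ← Finset.prod_mul_distrib]
  refine Finset.prod_congr rfl fun i _ => Finset.prod_congr rfl fun j _ => ?_
  split_ifs
  · rw [Pi.add_apply, add_mul, zpow_add₀ (hQ j i)]
  · rw [one_mul]

theorem qsigma_add_right (hQ : ∀ i j, Q i j ≠ 0) (m n n' : Fin d → ℤ) :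
    qsigma d Q m (n + n') = qsigma d Q m n * qsigma d Q m n' := by
  simp only [qsigma, ← Finset.prod_mul_distrib]
  refine Finset.prod_congr rfl fun i _ => Finset.prod_congr rfl fun j _ => ?_
  split_ifs
  · rw [Pi.add_apply, mul_add, zpow_add₀ (hQ j i)]
  · rw [one_mul]

noncomputable def commChar (hQ : ∀ i j, Q i j ≠ 0) (m : Fin d → ℤ) :
    AddChar (Fin d → ℤ) ℂ where
  toFun n := qsigma d Q m n / qsigma d Q n m
  map_zero_eq_one' := by simp
  map_add_eq_mul' n n' := by rw [qsigma_add_right hQ, qsigma_add_left hQ, mul_div_mul_comm]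

section commChar

variable (hQ : ∀ i j, Q i j ≠ 0)

theorem commChar_apply_eq_one_iff {m n : Fin d → ℤ} :
    commChar hQ m n = 1 ↔ qsigma d Q m n = qsigma d Q n m :=
  div_eq_one_iff_eq (qsigma_ne_zero hQ n m)

theorem commChar_apply_eq_one_comm {m n : Fin d → ℤ} :
    commChar hQ m n = 1 ↔ commChar hQ n m = 1 := by
  rw [commChar_apply_eq_one_iff, commChar_apply_eq_one_iff, eq_comm]

theorem commChar_add (m m' : Fin d → ℤ) :
    commChar hQ (m + m') = commChar hQ m * commChar hQ m' := by
  ext n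
  simp only [commChar, AddChar.coe_mk, AddChar.mul_apply, qsigma_add_left hQ,
    qsigma_add_right hQ, mul_div_mul_comm]

theorem commChar_apply_self (m : Fin d → ℤ) : commChar hQ m m = 1 :=
  (commChar_apply_eq_one_iff hQ).2 rfl

theorem mem_Rset_iff {m : Fin d → ℤ} : m ∈ Rset d Q ↔ commChar hQ m = 1 := by
  simp only [AddChar.eq_one_iff, commChar_apply_eq_one_iff]
  rfl

theorem notMem_Rset_of_commChar_ne_one {m n : Fin d → ℤ} (h : commChar hQ m n ≠ 1) :
    n ∉ Rset d Q :=
  fun hn => h ((commChar_apply_eq_one_iff hQ).2 (hn m).symm)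

end commChar

theorem zero_mem_Rset : (0 : Fin d → ℤ) ∈ Rset d Q := fun n => by simp

theorem add_mem_Rset (hQ : ∀ i j, Q i j ≠ 0) {m n : Fin d → ℤ} (hm : m ∈ Rset d Q)
    (hn : n ∈ Rset d Q) : m + n ∈ Rset d Q := by
  rw [mem_Rset_iff hQ] at *
  rw [commChar_add, hm, hn, one_mul]

variable {γ : Fin d → ℂ}

theorem ip_ne_zero (hγ : Generic d γ) {v : Fin d → ℤ} (hv : v ≠ 0) : ip d γ v ≠ 0 := by
  contrapose! hv
  funext i
  refine Fintype.linearIndependent_iff.1 (hγ.restrict_scalars' ℤ) v ?_ i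
  simpa [ip, zsmul_eq_mul, mul_comm] using hv

theorem sc_ne_zero_of_mem_left (hQ : ∀ i j, Q i j ≠ 0) (hγ : Generic d γ) {m n : Fin d → ℤ}
    (hm : m ∈ Rset d Q) (hmn : m ≠ n) : sc d Q γ m n ≠ 0 := by
  rw [sc, if_pos hm]
  split_ifs with hn
  · exact mul_ne_zero (qsigma_ne_zero hQ m n) (ip_ne_zero hγ (sub_ne_zero.2 hmn.symm))
  · refine mul_ne_zero (qsigma_ne_zero hQ m n) (ip_ne_zero hγ ?_)
    rintro rfl
    exact hn zero_mem_Rset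

theorem sc_ne_zero_of_commChar_ne_one (hQ : ∀ i j, Q i j ≠ 0) {m n : Fin d → ℤ}
    (h : commChar hQ m n ≠ 1) : sc d Q γ m n ≠ 0 := by
  have hm : m ∉ Rset d Q := notMem_Rset_of_commChar_ne_one hQ
    (mt (commChar_apply_eq_one_comm hQ).2 h)
  rw [sc, if_neg hm, if_neg (notMem_Rset_of_commChar_ne_one hQ h)]
  exact sub_ne_zero.2 (mt (commChar_apply_eq_one_iff hQ).2 h)

theorem br_single (m n : Fin d → ℤ) (a b : ℂ) :
    br d Q γ (Finsupp.single m a) (Finsupp.single n b) =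
      Finsupp.single (m + n) (a * b * sc d Q γ m n) := by
  rw [br, Finsupp.sum_single_index (by simp), Finsupp.sum_single_index (by simp)]

theorem map_add_of_isDer_of_sc_ne_zero {D : g d →ₗ[ℂ] g d} {φ : (Fin d → ℤ) → ℂ}
    (hD : IsDer d Q γ D) (hφ : ∀ m, D (L d m) = φ m • L d m) {m n : Fin d → ℤ}
    (h : sc d Q γ m n ≠ 0) : φ (m + n) = φ m + φ n := by
  have hDmn := hD (L d m) (L d n)
  rw [hφ, hφ] at hDmn
  simp only [L, Finsupp.smul_single_one, br_single, one_mul, mul_one] at hDmn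
  rw [← Finsupp.smul_single_one, map_smul, ← L, hφ, L, smul_smul, Finsupp.smul_single_one,
    ← Finsupp.single_add] at hDmn
  exact mul_left_cancel₀ h (by linear_combination Finsupp.single_injective _ hDmn)

variable {φ : (Fin d → ℤ) → ℂ}

theorem map_add_self_of_mem [NeZero d] (hQ : ∀ i j, Q i j ≠ 0)
    (hR : ∀ m n, m ∈ Rset d Q → m ≠ n → φ (m + n) = φ m + φ n)
    {m : Fin d → ℤ} (hm : m ∈ Rset d Q) : φ (m + m) = φ m + φ m := by
  obtain ⟨t, ht⟩ := Infinite.exists_notMem_finset ({0, m, m + m} : Finset (Fin d → ℤ))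
  simp only [Finset.mem_insert, Finset.mem_singleton, not_or] at ht
  obtain ⟨ht0, htm, htmm⟩ := ht
  exact map_add_of_map_add_assoc (hR m t hm (Ne.symm htm))
    (hR m (m + t) hm fun h => ht0 (left_eq_add.1 h))
    (hR (m + m) t (add_mem_Rset hQ hm hm) (Ne.symm htmm))

section Additivity

variable (hQ : ∀ i j, Q i j ≠ 0)

theorem map_add_of_commChar_ne_one
    (hR : ∀ m n, m ∈ Rset d Q → m ≠ n → φ (m + n) = φ m + φ n)
    (hχ : ∀ m n, commChar hQ m n ≠ 1 → φ (m + n) = φ m + φ n)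
    {m n t : Fin d → ℤ} (hmn : commChar hQ m n = 1) (hmt : commChar hQ m t ≠ 1)
    (hnt : commChar hQ n t ≠ 1) (hmnt : m + n ∈ Rset d Q ∨ commChar hQ (m + n) t ≠ 1) :
    φ (m + n) = φ m + φ n := by
  refine map_add_of_map_add_assoc (hχ n t hnt) (hχ m (n + t) ?_) ?_
  · rwa [AddChar.map_add_eq_mul, hmn, one_mul]
  · rcases hmnt with hmn_mem | hmnt
    · exact hR _ _ hmn_mem fun h => notMem_Rset_of_commChar_ne_one hQ hnt (h ▸ hmn_mem)
    · exact hχ _ _ hmnt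

theorem map_add_of_add_mem
    (hR : ∀ m n, m ∈ Rset d Q → m ≠ n → φ (m + n) = φ m + φ n)
    (hχ : ∀ m n, commChar hQ m n ≠ 1 → φ (m + n) = φ m + φ n)
    {m n : Fin d → ℤ} (hm : m ∉ Rset d Q) (hmn : commChar hQ m n = 1)
    (hmn_mem : m + n ∈ Rset d Q) : φ (m + n) = φ m + φ n := by
  obtain ⟨t, hmt⟩ := AddChar.ne_one_iff.1 ((mem_Rset_iff hQ).not.1 hm)
  have hprod : commChar hQ m t * commChar hQ n t = 1 := by
    rw [← AddChar.mul_apply, ← commChar_add, (mem_Rset_iff hQ).1 hmn_mem, AddChar.one_apply]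
  refine map_add_of_commChar_ne_one hQ hR hχ hmn hmt (fun hnt => hmt ?_) (Or.inl hmn_mem)
  rwa [hnt, mul_one] at hprod

theorem map_add_of_add_self_mem
    (hR : ∀ m n, m ∈ Rset d Q → m ≠ n → φ (m + n) = φ m + φ n)
    (hχ : ∀ m n, commChar hQ m n ≠ 1 → φ (m + n) = φ m + φ n)
    {m n : Fin d → ℤ} (hm : m ∉ Rset d Q) (hn : n ∉ Rset d Q) (hmn : commChar hQ m n = 1)
    (hmn_mem : m + n ∉ Rset d Q) (hmm : m + m ∈ Rset d Q) (hnn : n + n ∈ Rset d Q) :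
    φ (m + n) = φ m + φ n := by
  have hdouble : ∀ {u}, u ∉ Rset d Q → u + u ∈ Rset d Q → φ (u + u) = φ u + φ u :=
    fun hu huu => map_add_of_add_mem hQ hR hχ hu (commChar_apply_self hQ _) huu
  rcases eq_or_ne m n with rfl | hne
  · exact hdouble hm hmm
  have hsum : φ (m + m + (n + n)) = φ (m + m) + φ (n + n) :=
    hR _ _ hmm fun h => hne (funext fun i => by have := congrFun h i; simp only [Pi.add_apply] at this; omega)
  have hmn2 := hdouble hmn_mem (by rw [add_add_add_comm]; exact add_mem_Rset hQ hmm hnn)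
  rw [add_add_add_comm] at hmn2
  linear_combination (hsum - hmn2 + hdouble hm hmm + hdouble hn hnn) / 2

theorem map_add_of_add_self_notMem
    (hR : ∀ m n, m ∈ Rset d Q → m ≠ n → φ (m + n) = φ m + φ n)
    (hχ : ∀ m n, commChar hQ m n ≠ 1 → φ (m + n) = φ m + φ n)
    {m n : Fin d → ℤ} (hmn : commChar hQ m n = 1) (hn : n ∉ Rset d Q)
    (hmn_mem : m + n ∉ Rset d Q) (hmm : m + m ∉ Rset d Q) : φ (m + n) = φ m + φ n := by
  rw [mem_Rset_iff hQ] at hn hmn_mem hmm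
  rw [commChar_add] at hmn_mem hmm
  obtain ⟨t, hmt, hnt, hmnt⟩ := AddChar.exists_apply_ne_one (by rwa [sq]) hn hmn_mem
  exact map_add_of_commChar_ne_one hQ hR hχ hmn hmt hnt (Or.inr (by rwa [commChar_add]))

theorem map_add_of_mem_Rset_or_commChar_ne_one [NeZero d]
    (hR : ∀ m n, m ∈ Rset d Q → m ≠ n → φ (m + n) = φ m + φ n)
    (hχ : ∀ m n, commChar hQ m n ≠ 1 → φ (m + n) = φ m + φ n)
    (m n : Fin d → ℤ) : φ (m + n) = φ m + φ n := by
  by_cases hm : m ∈ Rset d Q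
  · rcases eq_or_ne m n with rfl | hmn
    · exact map_add_self_of_mem hQ hR hm
    · exact hR m n hm hmn
  by_cases hn : n ∈ Rset d Q
  · rw [add_comm, add_comm (φ m)]
    exact hR n m hn fun h => hm (h ▸ hn)
  by_cases hmn : commChar hQ m n = 1
  swap
  · exact hχ m n hmn
  by_cases hmn_mem : m + n ∈ Rset d Q
  · exact map_add_of_add_mem hQ hR hχ hm hmn hmn_mem
  by_cases hmm : m + m ∈ Rset d Q
  · by_cases hnn : n + n ∈ Rset d Q
    · exact map_add_of_add_self_mem hQ hR hχ hm hn hmn hmn_mem hmm hnn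
    · rw [add_comm, add_comm (φ m)]
      exact map_add_of_add_self_notMem hQ hR hχ ((commChar_apply_eq_one_comm hQ).1 hmn) hm
        (by rwa [add_comm]) hnn
  · exact map_add_of_add_self_notMem hQ hR hχ hmn hn hmn_mem hmm

end Additivity

end QTorus

open QTorus

/-- if D is a degree-zero derivation of g(γ,Q), D(L_m) = φ(m)L_m, then
φ is additive and D = ∑ φ(e_i)∂_i, i.e. D(L_m) = (∑_i φ(e_i) m_i) L_m for all m;
in particular the degree-zero derivations are exactly the span of ∂_1,…,∂_d. -/
theorem stmt7 (d : ℕ) (hd : 1 < d) (Q : Matrix (Fin d) (Fin d) ℂ) (hQ : QOk d Q)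
    (γ : Fin d → ℂ) (hγ : Generic d γ)
    (D : g d →ₗ[ℂ] g d) (hD : IsDer d Q γ D)
    (φ : (Fin d → ℤ) → ℂ) (hφ : ∀ m : Fin d → ℤ, D (L d m) = φ m • L d m) :
    (∀ m n : Fin d → ℤ, φ (m + n) = φ m + φ n) ∧
    (∀ m : Fin d → ℤ,
      D (L d m) = (∑ i : Fin d, φ (Pi.single i 1) * (m i : ℂ)) • L d m) := by
  have : NeZero d := ⟨by omega⟩
  have hadd : ∀ m n, φ (m + n) = φ m + φ n :=
    map_add_of_mem_Rset_or_commChar_ne_one hQ.2.2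
      (fun _ _ hm hmn => map_add_of_isDer_of_sc_ne_zero hD hφ
        (sc_ne_zero_of_mem_left hQ.2.2 hγ hm hmn))
      (fun _ _ h => map_add_of_isDer_of_sc_ne_zero hD hφ (sc_ne_zero_of_commChar_ne_one hQ.2.2 h))
  exact ⟨hadd, fun m => by rw [hφ, apply_eq_sum_mul_single hadd]⟩
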